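/- Fix v > 0, τ > 0, and let H : [0,∞) → ℝ be defined by H(ρ) = 4πv·I_0(ρ)/(1 − ν·π·(2/ρ)·I_1(ρ)) (with the convention (2/ρ)I_1(ρ) = 1 at ρ = 0), where 0 < ν < 1/π. Define θ(ρ) = √((τ + ν H(ρ))² + ρ²v²) − τ. Then as ν → 0, the minimum over ρ > 0 of θ(ρ)/ρ is O(√ν); more precisely it equals v·√(2νH(0)/τ) + O(ν^{3/2}). -/

import Mathlib

/-!
For a constant rate `β` the ratio `ρ ↦ (√((τ + β)² + ρ²v²) − τ) / ρ` is bounded below by the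
slope `v √((τ + β)² − τ²) / (τ + β)` of the tangent from `(0, τ)` to the hyperbola, and at
`ρ₀ = √(2τβ) / v` it is at most `v √(2β/τ) + O(β^{3/2})`; the slope is also
`v √(2β/τ) − O(β^{3/2})`. Take `β = ν H(0)`. Where the denominator `1 − νπ (2/ρ) I₁(ρ)` is
positive, `ν H(ρ) ≥ β` since `I₀, (2/ρ) I₁ ≥ 1`; for small `ν` this covers `ρ ≤ 2τ/v` because
`(2/ρ) I₁(ρ) ≤ exp (ρ²/4)`, and beyond `2τ/v` the ratio is at least `v/2` whatever the rate.
At `ρ₀ = O(√ν)` the power series give `H(ρ₀) ≤ H(0) + O(ρ₀²)`, which costs only `O(ν^{3/2})`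
in the upper bound.
-/

open Real Filter Asymptotics

/-- Modified Bessel function of the first kind of order 0. -/
noncomputable def besselI0 (x : ℝ) : ℝ :=
  ∑' k : ℕ, (x / 2) ^ (2 * k) / ((Nat.factorial k : ℝ)) ^ 2

/-- Modified Bessel function of the first kind of order 1. -/
noncomputable def besselI1 (x : ℝ) : ℝ :=
  ∑' k : ℕ, (x / 2) ^ (2 * k + 1) / ((Nat.factorial (k + 1) : ℝ) * (Nat.factorial k : ℝ))

/-- `(2/ρ) I₁(ρ)`, extended by continuity with value `1` at `ρ = 0`. -/
noncomputable def besselRatio (ρ : ℝ) : ℝ :=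
  if ρ = 0 then 1 else (2 / ρ) * besselI1 ρ

open Set Topology
open scoped Nat

section FactorialSeries

variable {c : ℕ → ℝ} {y : ℝ}

lemma one_le_of_factorial_le (hc : ∀ k, (k ! : ℝ) ≤ c k) (k : ℕ) : 1 ≤ c k :=
  (Nat.one_le_cast.2 k.factorial_pos).trans (hc k)

lemma summable_pow_div_of_factorial_le (hc : ∀ k, (k ! : ℝ) ≤ c k) (hy : 0 ≤ y) :
    Summable fun k => y ^ k / c k :=
  (Real.summable_pow_div_factorial y).of_nonneg_of_le
    (fun k => div_nonneg (pow_nonneg hy k) (zero_le_one.trans (one_le_of_factorial_le hc k)))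
    (fun k => div_le_div_of_nonneg_left (pow_nonneg hy k) (Nat.cast_pos.2 k.factorial_pos) (hc k))

lemma one_le_tsum_pow_div (hc : ∀ k, (k ! : ℝ) ≤ c k) (hc0 : c 0 = 1) (hy : 0 ≤ y) :
    1 ≤ ∑' k, y ^ k / c k := by
  simpa [hc0] using (summable_pow_div_of_factorial_le hc hy).le_tsum 0 fun k _ =>
    div_nonneg (pow_nonneg hy k) (zero_le_one.trans (one_le_of_factorial_le hc k))

lemma tsum_pow_div_le_exp (hc : ∀ k, (k ! : ℝ) ≤ c k) (hy : 0 ≤ y) :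
    ∑' k, y ^ k / c k ≤ exp y := by
  rw [Real.exp_eq_exp_ℝ, NormedSpace.exp_eq_tsum_div]
  exact (summable_pow_div_of_factorial_le hc hy).tsum_le_tsum
    (fun k => div_le_div_of_nonneg_left (pow_nonneg hy k) (Nat.cast_pos.2 k.factorial_pos) (hc k))
    (Real.summable_pow_div_factorial y)

lemma tsum_pow_div_le_one_add_two_mul (hc : ∀ k, (k ! : ℝ) ≤ c k) (hy : 0 ≤ y)
    (hy2 : y ≤ 1 / 2) : ∑' k, y ^ k / c k ≤ 1 + 2 * y := by
  have hy1 : y < 1 := by linarith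
  calc ∑' k, y ^ k / c k ≤ ∑' k, y ^ k :=
        (summable_pow_div_of_factorial_le hc hy).tsum_le_tsum
          (fun k => div_le_self (pow_nonneg hy k) (one_le_of_factorial_le hc k))
          (summable_geometric_of_lt_one hy hy1)
    _ = (1 - y)⁻¹ := tsum_geometric_of_lt_one hy hy1
    _ ≤ 1 + 2 * y := by
        rw [inv_le_iff_one_le_mul₀ (by linarith)]
        nlinarith

end FactorialSeries

section Bessel

lemma besselI0_eq_tsum (x : ℝ) :
    besselI0 x = ∑' k : ℕ, ((x / 2) ^ 2) ^ k / ((k ! : ℝ) ^ 2) := by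
  simp only [besselI0, pow_mul]

lemma besselRatio_eq_tsum (x : ℝ) :
    besselRatio x = ∑' k : ℕ, ((x / 2) ^ 2) ^ k / ((k + 1)! * k ! : ℝ) := by
  unfold besselRatio
  split_ifs with hx
  · subst hx
    rw [tsum_eq_single 0 fun k hk => by simp [hk]]
    simp
  · rw [besselI1, ← tsum_mul_left]
    congr 1 with k
    rw [pow_succ, pow_mul]
    field_simp

lemma factorial_le_factorial_sq (k : ℕ) : (k ! : ℝ) ≤ (k ! : ℝ) ^ 2 :=
  le_self_pow₀ (Nat.one_le_cast.2 k.factorial_pos) two_ne_zero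

lemma factorial_le_factorial_succ_mul (k : ℕ) : (k ! : ℝ) ≤ (k + 1)! * k ! :=
  le_mul_of_one_le_left (Nat.cast_nonneg _) (Nat.one_le_cast.2 (k + 1).factorial_pos)

lemma one_le_besselI0 (x : ℝ) : 1 ≤ besselI0 x := by
  rw [besselI0_eq_tsum]
  exact one_le_tsum_pow_div factorial_le_factorial_sq (by simp) (by positivity)

lemma one_le_besselRatio (x : ℝ) : 1 ≤ besselRatio x := by
  rw [besselRatio_eq_tsum]
  exact one_le_tsum_pow_div factorial_le_factorial_succ_mul (by simp) (by positivity)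

lemma besselRatio_le_exp (x : ℝ) : besselRatio x ≤ exp ((x / 2) ^ 2) := by
  rw [besselRatio_eq_tsum]
  exact tsum_pow_div_le_exp factorial_le_factorial_succ_mul (by positivity)

lemma besselI0_le_one_add_sq {x : ℝ} (hx : x ^ 2 ≤ 1) : besselI0 x ≤ 1 + x ^ 2 := by
  rw [besselI0_eq_tsum]
  refine (tsum_pow_div_le_one_add_two_mul factorial_le_factorial_sq (by positivity)
    (by nlinarith)).trans ?_
  nlinarith

lemma besselRatio_le_one_add_sq {x : ℝ} (hx : x ^ 2 ≤ 1) : besselRatio x ≤ 1 + x ^ 2 := by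
  rw [besselRatio_eq_tsum]
  refine (tsum_pow_div_le_one_add_two_mul factorial_le_factorial_succ_mul (by positivity)
    (by nlinarith)).trans ?_
  nlinarith

end Bessel

section Rate

variable {c ε ρ : ℝ}

lemma div_one_sub_le_besselI0_div (hc : 0 ≤ c) (hε : 0 ≤ ε)
    (hpos : 0 < 1 - ε * besselRatio ρ) :
    c / (1 - ε) ≤ c * besselI0 ρ / (1 - ε * besselRatio ρ) :=
  div_le_div₀ (by nlinarith [one_le_besselI0 ρ]) (le_mul_of_one_le_right hc (one_le_besselI0 ρ))
    hpos (by nlinarith [one_le_besselRatio ρ])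

lemma besselI0_div_le (hc : 0 ≤ c) (hε : 0 ≤ ε) (hε4 : ε ≤ 1 / 4) (hρ : ρ ^ 2 ≤ 1) :
    c * besselI0 ρ / (1 - ε * besselRatio ρ) ≤ c / (1 - ε) + 4 * c * ρ ^ 2 := by
  have hD : 1 / 2 ≤ 1 - ε * (1 + ρ ^ 2) := by nlinarith
  have hcancel : c / (1 - ε) * (1 - ε) = c := div_mul_cancel₀ c (by linarith)
  have hb0 : 0 ≤ c / (1 - ε) := div_nonneg hc (by linarith)
  calc c * besselI0 ρ / (1 - ε * besselRatio ρ) ≤ c * (1 + ρ ^ 2) / (1 - ε * (1 + ρ ^ 2)) :=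
        div_le_div₀ (by positivity) (mul_le_mul_of_nonneg_left (besselI0_le_one_add_sq hρ) hc)
          (by linarith) (by nlinarith [besselRatio_le_one_add_sq hρ])
    _ ≤ c / (1 - ε) + 4 * c * ρ ^ 2 := by
        rw [div_le_iff₀ (by linarith)]
        nlinarith [mul_nonneg hc (sq_nonneg ρ), mul_nonneg hb0 (sq_nonneg ρ),
          mul_nonneg (mul_nonneg hc (sq_nonneg ρ)) hε]

end Rate

lemma add_div_mul_le_sqrt {a t : ℝ} (ha : 0 < a) (ht : t ^ 2 ≤ a ^ 2) (x : ℝ) :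
    t + √(a ^ 2 - t ^ 2) / a * x ≤ √(a ^ 2 + x ^ 2) := by
  apply Real.le_sqrt_of_sq_le
  have hs : √(a ^ 2 - t ^ 2) ^ 2 = a ^ 2 - t ^ 2 := Real.sq_sqrt (by linarith)
  rw [show t + √(a ^ 2 - t ^ 2) / a * x = (t * a + √(a ^ 2 - t ^ 2) * x) / a by field_simp,
    div_pow, div_le_iff₀ (by positivity)]
  nlinarith [sq_nonneg (t * x - √(a ^ 2 - t ^ 2) * a)]

lemma sqrt_sub_sqrt_le_div {p q r : ℝ} (hq : 0 ≤ q) (hqp : q ≤ p) (hr : 0 < r) (hrp : r ^ 2 ≤ p) :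
    √p - √q ≤ (p - q) / r := by
  have hrp' : r ≤ √p := Real.le_sqrt_of_sq_le hrp
  rw [le_div_iff₀ hr]
  calc (√p - √q) * r ≤ (√p - √q) * (√p + √q) := by
        nlinarith [Real.sqrt_nonneg q, Real.sqrt_le_sqrt hqp]
    _ = √p ^ 2 - √q ^ 2 := by ring
    _ = p - q := by rw [Real.sq_sqrt hq, Real.sq_sqrt (hq.trans hqp)]

/-- The paper's `θ(ρ)/ρ`, with `g ρ` in place of `ν H(ρ)`. -/
noncomputable def speedRatio (v τ : ℝ) (g : ℝ → ℝ) (ρ : ℝ) : ℝ :=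
  (√((τ + g ρ) ^ 2 + ρ ^ 2 * v ^ 2) - τ) / ρ

section SpeedRatio

variable {v τ β δ ρ : ℝ} {g : ℝ → ℝ}

lemma le_speedRatio_of_le (hτ : 0 < τ) (hβ : 0 ≤ β) (hρ : 0 < ρ)
    (hg : β ≤ g ρ) :
    v * (√((τ + β) ^ 2 - τ ^ 2) / (τ + β)) ≤ speedRatio v τ g ρ := by
  rw [speedRatio, le_div_iff₀ hρ]
  have hmono : √((τ + β) ^ 2 + (ρ * v) ^ 2) ≤ √((τ + g ρ) ^ 2 + ρ ^ 2 * v ^ 2) :=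
    Real.sqrt_le_sqrt (by nlinarith)
  have := add_div_mul_le_sqrt (t := τ) (by positivity : 0 < τ + β) (by nlinarith) (ρ * v)
  nlinarith

lemma sub_div_le_speedRatio (hρ : 0 < ρ) : v - τ / ρ ≤ speedRatio v τ g ρ := by
  have : ρ * v ≤ √((τ + g ρ) ^ 2 + ρ ^ 2 * v ^ 2) :=
    Real.le_sqrt_of_sq_le (by nlinarith [sq_nonneg (τ + g ρ)])
  rw [speedRatio, sub_div' hρ.ne', div_le_div_iff_of_pos_right hρ]
  linarith

lemma speedRatio_le (hτ : 0 < τ) (hβ : 0 < β) (hδ : 0 ≤ δ) (hρ : 0 < ρ)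
    (hρv : ρ * v = √(2 * τ * β)) (hg₀ : -τ ≤ g ρ) (hg : g ρ ≤ β + δ) :
    speedRatio v τ g ρ ≤ v * √(2 * β / τ) + δ / ρ := by
  have hsq : (ρ * v) ^ 2 = 2 * τ * β := by rw [hρv, Real.sq_sqrt (by positivity)]
  have hroot : √((τ + g ρ) ^ 2 + ρ ^ 2 * v ^ 2) ≤ τ + 2 * β + δ :=
    Real.sqrt_le_iff.2 ⟨by positivity, by nlinarith⟩
  have htarget : 2 * β / ρ = v * √(2 * β / τ) := by
    have hprod : √(2 * β / τ) * √(2 * τ * β) = 2 * β := by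
      rw [← Real.sqrt_mul (by positivity), show 2 * β / τ * (2 * τ * β) = (2 * β) ^ 2 by
        field_simp, Real.sqrt_sq (by positivity)]
    rw [div_eq_iff hρ.ne']
    calc 2 * β = √(2 * β / τ) * √(2 * τ * β) := hprod.symm
      _ = v * √(2 * β / τ) * ρ := by rw [← hρv]; ring
  calc speedRatio v τ g ρ ≤ (2 * β + δ) / ρ := by
        rw [speedRatio]
        gcongr
        linarith
    _ = v * √(2 * β / τ) + δ / ρ := by rw [add_div, htarget]

lemma sInf_speedRatio_bounds {R ρ₀ : ℝ} (hv : 0 < v) (hτ : 0 < τ) (hβ : 0 < β)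
    (hβτ : β ≤ τ / 8) (hR : 2 * τ ≤ R * v) (hlow : ∀ ρ ∈ Ioc 0 R, β ≤ g ρ) (hδ : 0 ≤ δ)
    (hρ₀ : 0 < ρ₀) (hρ₀v : ρ₀ * v = √(2 * τ * β)) (hg₀ : -τ ≤ g ρ₀) (hup : g ρ₀ ≤ β + δ) :
    v * (√((τ + β) ^ 2 - τ ^ 2) / (τ + β)) ≤ sInf (speedRatio v τ g '' Ioi 0) ∧
      sInf (speedRatio v τ g '' Ioi 0) ≤ v * √(2 * β / τ) + δ / ρ₀ := by
  set L := v * (√((τ + β) ^ 2 - τ ^ 2) / (τ + β))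
  have hL : L ≤ v / 2 := by
    have hroot : √((τ + β) ^ 2 - τ ^ 2) ≤ (τ + β) / 2 :=
      Real.sqrt_le_iff.2 ⟨by positivity, by nlinarith⟩
    have : √((τ + β) ^ 2 - τ ^ 2) / (τ + β) ≤ 1 / 2 := by
      rw [div_le_iff₀ (by positivity)]
      linarith
    nlinarith
  have hbound : ∀ y ∈ speedRatio v τ g '' Ioi 0, L ≤ y := by
    rintro _ ⟨ρ, hρ, rfl⟩
    rcases le_or_gt ρ R with hρR | hRρ
    · exact le_speedRatio_of_le hτ hβ.le hρ (hlow ρ ⟨hρ, hρR⟩)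
    · have : τ / ρ ≤ v / 2 := by
        rw [div_le_iff₀ hρ]
        nlinarith [mul_lt_mul_of_pos_right hRρ hv]
      linarith [sub_div_le_speedRatio (τ := τ) (g := g) (v := v) hρ]
  exact ⟨le_csInf ⟨_, mem_image_of_mem _ (mem_Ioi.2 one_pos)⟩ hbound,
    (csInf_le ⟨L, hbound⟩ (mem_image_of_mem _ hρ₀)).trans
      (speedRatio_le hτ hβ hδ hρ₀ hρ₀v hg₀ hup)⟩

lemma sqrt_two_mul_div_sub_le (hv : 0 ≤ v) (hτ : 0 < τ) (hβ : 0 < β) (hβτ : β ≤ τ) :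
    v * √(2 * β / τ) - v * (√((τ + β) ^ 2 - τ ^ 2) / (τ + β)) ≤
      5 * v / τ * β * √(β / (2 * τ)) := by
  -- The gap is `(v / a) (√p − √q)` with `p − q = O(β²)` and `√p ≥ √(2τβ)`.
  set a := τ + β
  set p := 2 * β / τ * a ^ 2
  set q := a ^ 2 - τ ^ 2
  set r := √(2 * τ * β)
  have ha : 0 < a := by positivity
  have hr : 0 < r := by positivity
  have hp : √(2 * β / τ) = √p / a := by
    rw [Real.sqrt_mul' _ (sq_nonneg a), Real.sqrt_sq ha.le, mul_div_cancel_right₀ _ ha.ne']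
  have hpq : p - q = (3 * τ * β ^ 2 + 2 * β ^ 3) / τ := by
    simp only [p, q, a]
    field_simp
    ring
  have hpq5 : p - q ≤ 5 * β ^ 2 := by
    rw [hpq, div_le_iff₀ hτ]
    nlinarith
  have hq : 0 ≤ q := by nlinarith
  have hqp : q ≤ p := by rw [← sub_nonneg, hpq]; positivity
  have hrp : r ^ 2 ≤ p := by
    simp only [r, p, a]
    rw [Real.sq_sqrt (by positivity), div_mul_eq_mul_div, le_div_iff₀ hτ]
    nlinarith
  have hβr : β ^ 2 / r = β * √(β / (2 * τ)) := by
    have : √(β / (2 * τ)) * r = β := by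
      rw [← Real.sqrt_mul (by positivity), show β / (2 * τ) * (2 * τ * β) = β ^ 2 by field_simp,
        Real.sqrt_sq hβ.le]
    rw [div_eq_iff hr.ne', mul_assoc, this, sq]
  calc v * √(2 * β / τ) - v * (√q / a) = v / a * (√p - √q) := by rw [hp]; ring
    _ ≤ v / a * ((p - q) / r) :=
        mul_le_mul_of_nonneg_left (sqrt_sub_sqrt_le_div hq hqp hr hrp) (by positivity)
    _ ≤ v / τ * (5 * β ^ 2 / r) :=
        mul_le_mul (div_le_div_of_nonneg_left hv hτ (by linarith))
          (div_le_div_of_nonneg_right hpq5 hr.le) (div_nonneg (by linarith) hr.le) (by positivity)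
    _ = 5 * v / τ * β * √(β / (2 * τ)) := by rw [mul_div_assoc, hβr]; ring

end SpeedRatio

lemma Asymptotics.isBigO_of_norm_le_mul {α E F : Type*} [Norm E] [SeminormedAddGroup F]
    {l : Filter α} {f : α → E} {g : α → F} {K : α → ℝ} {c : ℝ} (hK : Tendsto K l (𝓝 c))
    (h : ∀ᶠ x in l, ‖f x‖ ≤ K x * ‖g x‖) : f =O[l] g :=
  isBigO_iff.2 ⟨c + 1, by
    filter_upwards [h, hK.eventually (eventually_le_nhds (lt_add_one c))] with x hx hKx
    exact hx.trans (mul_le_mul_of_nonneg_right hKx (norm_nonneg _))⟩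

/-- The paper's `H(ρ)` at density `ν`. -/
noncomputable def besselRate (v ν ρ : ℝ) : ℝ :=
  4 * π * v * besselI0 ρ / (1 - ν * π * besselRatio ρ)

section BesselRate

variable {v τ ν b : ℝ}

lemma sInf_speedRatio_besselRate_bounds (hv : 0 < v) (hτ : 0 < τ) (hν : 0 < ν)
    (hb : b = 4 * π * v / (1 - π * ν)) (hνπ : ν * π ≤ 1 / 4)
    (hexp : ν * π * exp ((τ / v) ^ 2) < 1) (hβτ : ν * b ≤ τ / 8)
    (hρ₀ : 2 * τ * (ν * b) ≤ v ^ 2) :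
    v * (√((τ + ν * b) ^ 2 - τ ^ 2) / (τ + ν * b)) ≤
        sInf (speedRatio v τ (fun ρ => ν * besselRate v ν ρ) '' Ioi 0) ∧
      sInf (speedRatio v τ (fun ρ => ν * besselRate v ν ρ) '' Ioi 0) ≤
        v * √(2 * (ν * b) / τ) + 16 * π * ν * √(2 * τ * (ν * b)) := by
  rw [mul_comm π ν] at hb
  have hβ : 0 < ν * b := mul_pos hν (hb ▸ div_pos (by positivity) (by linarith))
  have hrate : ∀ ρ, 0 < 1 - ν * π * besselRatio ρ → ν * b ≤ ν * besselRate v ν ρ := fun ρ hρ =>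
    mul_le_mul_of_nonneg_left (hb ▸ div_one_sub_le_besselI0_div (by positivity) (by positivity) hρ)
      hν.le
  have hlow : ∀ ρ ∈ Ioc 0 (2 * τ / v), ν * b ≤ ν * besselRate v ν ρ := by
    rintro ρ ⟨hρ, hρR⟩
    refine hrate ρ ?_
    have : besselRatio ρ ≤ exp ((τ / v) ^ 2) := by
      refine (besselRatio_le_exp ρ).trans (exp_le_exp.2 ?_)
      rw [show τ / v = 2 * τ / v / 2 by ring]
      gcongr
    nlinarith [mul_le_mul_of_nonneg_left this (by positivity : 0 ≤ ν * π)]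
  set ρ₀ := √(2 * τ * (ν * b)) / v
  have hρ₀pos : 0 < ρ₀ := by positivity
  have hρ₀v : ρ₀ * v = √(2 * τ * (ν * b)) := div_mul_cancel₀ _ hv.ne'
  have hρ₀1 : ρ₀ ^ 2 ≤ 1 := by
    rwa [div_pow, Real.sq_sqrt (by positivity), div_le_one (by positivity)]
  have hden : 0 < 1 - ν * π * besselRatio ρ₀ := by
    have : besselRatio ρ₀ ≤ 2 := by linarith [besselRatio_le_one_add_sq hρ₀1]
    nlinarith [mul_le_mul_of_nonneg_left this (by positivity : 0 ≤ ν * π)]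
  have hup : ν * besselRate v ν ρ₀ ≤ ν * b + ν * (4 * (4 * π * v) * ρ₀ ^ 2) := by
    have := besselI0_div_le (c := 4 * π * v) (by positivity) (by positivity) hνπ hρ₀1
    rw [← hb] at this
    rw [besselRate, ← mul_add]
    exact mul_le_mul_of_nonneg_left this hν.le
  have hδ : ν * (4 * (4 * π * v) * ρ₀ ^ 2) / ρ₀ = 16 * π * ν * √(2 * τ * (ν * b)) := by
    rw [← hρ₀v]
    field_simp
    ring
  rw [← hδ]
  exact sInf_speedRatio_bounds hv hτ hβ hβτ (le_of_eq (by field_simp)) hlow (by positivity)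
    hρ₀pos hρ₀v (by linarith [hrate ρ₀ hden]) hup

lemma abs_sInf_speedRatio_besselRate_sub_le (hv : 0 < v) (hτ : 0 < τ) (hν : 0 < ν)
    (hb : b = 4 * π * v / (1 - π * ν)) (hνπ : ν * π ≤ 1 / 4)
    (hexp : ν * π * exp ((τ / v) ^ 2) < 1) (hβτ : ν * b ≤ τ / 8)
    (hρ₀ : 2 * τ * (ν * b) ≤ v ^ 2) :
    |sInf (speedRatio v τ (fun ρ => ν * besselRate v ν ρ) '' Ioi 0) - v * √(2 * ν * b / τ)| ≤
      (5 * v / τ * b * √(b / (2 * τ)) + 16 * π * √(2 * τ * b)) * (ν * √ν) := by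
  have hβ : 0 < ν * b := mul_pos hν (hb ▸ div_pos (by positivity) (by nlinarith [pi_pos]))
  obtain ⟨hL, hU⟩ := sInf_speedRatio_besselRate_bounds hv hτ hν hb hνπ hexp hβτ hρ₀
  have hgap := sqrt_two_mul_div_sub_le hv.le hτ hβ (by linarith)
  have hgap_eq : 5 * v / τ * (ν * b) * √(ν * b / (2 * τ)) =
      5 * v / τ * b * √(b / (2 * τ)) * (ν * √ν) := by
    rw [show ν * b / (2 * τ) = b / (2 * τ) * ν by ring, Real.sqrt_mul' _ hν.le]
    ring
  have hδ_eq : 16 * π * ν * √(2 * τ * (ν * b)) = 16 * π * √(2 * τ * b) * (ν * √ν) := by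
    rw [show 2 * τ * (ν * b) = 2 * τ * b * ν by ring, Real.sqrt_mul' _ hν.le]
    ring
  rw [mul_assoc 2 ν b, abs_sub_le_iff, add_mul, ← hgap_eq, ← hδ_eq]
  have hgap0 : 0 ≤ 5 * v / τ * (ν * b) * √(ν * b / (2 * τ)) := by positivity
  have hδ0 : 0 ≤ 16 * π * ν * √(2 * τ * (ν * b)) := by positivity
  constructor <;> linarith

end BesselRate

lemma isBigO_sInf_speedRatio_besselRate_sub {v τ : ℝ} (hv : 0 < v) (hτ : 0 < τ) :
    (fun ν => sInf (speedRatio v τ (fun ρ => ν * besselRate v ν ρ) '' Ioi 0) -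
        v * √(2 * ν * (4 * π * v / (1 - π * ν)) / τ)) =O[𝓝[>] 0] fun ν => ν * √ν := by
  set b : ℝ → ℝ := fun ν => 4 * π * v / (1 - π * ν)
  have hb : ContinuousAt b 0 := by fun_prop (disch := simp)
  have hK : ContinuousAt
      (fun ν => 5 * v / τ * b ν * √(b ν / (2 * τ)) + 16 * π * √(2 * τ * b ν)) 0 := by
    fun_prop
  have eventually_lt {f : ℝ → ℝ} {c : ℝ} (hf : ContinuousAt f 0) (h : f 0 < c) :
      ∀ᶠ ν in 𝓝[>] 0, f ν < c :=
    (hf.eventually_lt continuousAt_const h).filter_mono nhdsWithin_le_nhds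
  refine isBigO_of_norm_le_mul (hK.tendsto.mono_left nhdsWithin_le_nhds) ?_
  filter_upwards [self_mem_nhdsWithin,
    eventually_lt (f := fun ν => ν * π) (c := 1 / 4) (by fun_prop) (by norm_num),
    eventually_lt (f := fun ν => ν * π * exp ((τ / v) ^ 2)) (c := 1) (by fun_prop) (by norm_num),
    eventually_lt (f := fun ν => ν * b ν) (c := τ / 8) (by fun_prop) (by simpa using by positivity),
    eventually_lt (f := fun ν => 2 * τ * (ν * b ν)) (c := v ^ 2) (by fun_prop)
      (by simpa using by positivity)]
    with ν (hν : 0 < ν) h1 h2 h3 h4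
  rw [Real.norm_eq_abs, Real.norm_of_nonneg (by positivity)]
  exact abs_sInf_speedRatio_besselRate_sub_le hv hτ hν rfl h1.le h2 h3.le h4.le

theorem random_walk_speed_bound
    (v τ : ℝ) (hv : 0 < v) (hτ : 0 < τ)
    (H : ℝ → ℝ → ℝ)
    (hH : ∀ ν ρ : ℝ, H ν ρ = 4 * π * v * besselI0 ρ / (1 - ν * π * besselRatio ρ))
    (θf : ℝ → ℝ → ℝ)
    (hθf : ∀ ν ρ : ℝ,
      θf ν ρ = Real.sqrt ((τ + ν * H ν ρ) ^ 2 + ρ ^ 2 * v ^ 2) - τ)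
    (m : ℝ → ℝ)
    (hm : ∀ ν : ℝ, m ν = sInf ((fun ρ => θf ν ρ / ρ) '' Set.Ioi 0)) :
    (m =O[nhdsWithin 0 (Set.Ioi 0)] fun ν => Real.sqrt ν) ∧
    ((fun ν => m ν - v * Real.sqrt (2 * ν * (4 * π * v / (1 - π * ν)) / τ))
      =O[nhdsWithin 0 (Set.Ioi 0)] fun ν => ν * Real.sqrt ν) := by
  have hm' : ∀ ν, m ν = sInf (speedRatio v τ (fun ρ => ν * besselRate v ν ρ) '' Ioi 0) := by
    intro ν
    simp only [hm, hθf, hH]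
    rfl
  have hgap := isBigO_sInf_speedRatio_besselRate_sub hv hτ
  simp only [← hm'] at hgap
  refine ⟨?_, hgap⟩
  have htarget : (fun ν => v * √(2 * ν * (4 * π * v / (1 - π * ν)) / τ)) =O[𝓝[>] 0] sqrt := by
    have hK : ContinuousAt (fun ν => |v * √(2 * (4 * π * v / (1 - π * ν)) / τ)|) 0 := by
      fun_prop (disch := simp)
    refine isBigO_of_norm_le_mul (hK.tendsto.mono_left nhdsWithin_le_nhds) ?_
    filter_upwards [self_mem_nhdsWithin] with ν (hν : 0 < ν)
    rw [mul_right_comm 2 ν, mul_div_right_comm, Real.sqrt_mul' _ hν.le, ← mul_assoc, norm_mul,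
      Real.norm_eq_abs]
  have hsmall : (fun ν : ℝ => ν * √ν) =O[𝓝[>] 0] sqrt :=
    isBigO_of_norm_le_mul (continuous_abs.tendsto 0 |>.mono_left nhdsWithin_le_nhds)
      (Eventually.of_forall fun ν => by rw [norm_mul, Real.norm_eq_abs])
  simpa using (hgap.trans hsmall).add htarget
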